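/- arXiv:1512.03847 — 4 statements merged into one kernel-verified Lean document; each statement's English description precedes it below -/
import Mathlib

section
/- For every initial point (x₀, y₀) ∈ ℝ², there exists a differentiable curve γ : ℝ → ℝ × ℝ, defined on all of ℝ, such that γ(0) = (x₀, y₀) and for all t ∈ ℝ the derivative of the first component equals 1 and the derivative of the second component y(t) equals 2·y(t)²·(sin y(t))². In other words, the planar vector field (x,y) ↦ (1, 2y² sin²(y)), viewed as a connection on the projection ℝ² → ℝ onto the first coordinate, is complete: every integral curve extends to all of ℝ. -/
/-!
The zeros of `f y = 2 y² sin² y` are the points `kπ`, all of them of order at least two.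
A solution starting at a zero is constant. Otherwise it starts strictly between two consecutive
zeros `a < b`, where `f > 0` and `f y ≤ C (y - a)²`, `f y ≤ C (b - y)²`. The time
`F y = ∫_{y₀}^{y} ds / f(s)` needed to travel from `y₀` to `y` is then, up to additive
constants, at least `1 / (C (b - y))` and at most `-1 / (C (y - a))`. So `F` maps `(a, b)`
increasingly onto all of `ℝ`, and its inverse is a solution defined for all times.
-/

open Set Filter Topology Real

theorem hasDerivAt_intervalIntegral_of_continuousOn_Ioo {E : Type*} [NormedAddCommGroup E]
    [NormedSpace ℝ E] [CompleteSpace E] {g : ℝ → E} {a b y₀ y : ℝ}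
    (hg : ContinuousOn g (Ioo a b)) (hy₀ : y₀ ∈ Ioo a b) (hy : y ∈ Ioo a b) :
    HasDerivAt (fun z => ∫ s in y₀..z, g s) (g y) y :=
  intervalIntegral.integral_hasDerivAt_right
    (hg.mono (ordConnected_Ioo.uIcc_subset hy₀ hy)).intervalIntegrable
    (hg.stronglyMeasurableAtFilter isOpen_Ioo y hy)
    (hg.continuousAt (isOpen_Ioo.mem_nhds hy))

theorem tendsto_atTop_of_div_sq_le_deriv {F F' : ℝ → ℝ} {y₀ b c : ℝ} (hc : 0 < c) (hy₀ : y₀ < b)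
    (hF : ∀ y ∈ Ico y₀ b, HasDerivAt F (F' y) y)
    (hF' : ∀ y ∈ Ico y₀ b, c / (b - y) ^ 2 ≤ F' y) :
    Tendsto F (𝓝[<] b) atTop := by
  set H : ℝ → ℝ := fun y => c * (b - y)⁻¹
  have hH : ∀ y ∈ Ico y₀ b, HasDerivAt H (c / (b - y) ^ 2) y := fun y hy => by
    have hby : b - y ≠ 0 := (sub_pos.2 hy.2).ne'
    refine ((((hasDerivAt_id' y).const_sub b).inv hby).const_mul c).congr_deriv ?_
    ring
  have hmono : MonotoneOn (F - H) (Ico y₀ b) :=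
    monotoneOn_of_hasDerivWithinAt_nonneg (convex_Ico y₀ b)
      (fun y hy => ((hF y hy).sub (hH y hy)).continuousAt.continuousWithinAt)
      (fun y hy => ((hF y (interior_subset hy)).sub (hH y (interior_subset hy))).hasDerivWithinAt)
      (fun y hy => sub_nonneg.2 (hF' y (interior_subset hy)))
  have hb_sub : Tendsto (fun y => b - y) (𝓝[<] b) (𝓝[>] 0) :=
    tendsto_nhdsWithin_iff.2
      ⟨((continuous_sub_left b).tendsto' b 0 (sub_self b)).mono_left nhdsWithin_le_nhds,
        eventually_nhdsWithin_of_forall fun _ hy => mem_Ioi.2 (sub_pos.2 hy)⟩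
  have hHtop : Tendsto H (𝓝[<] b) atTop :=
    (tendsto_inv_nhdsGT_zero.comp hb_sub).const_mul_atTop hc
  refine tendsto_atTop_mono' _ ?_ (tendsto_atTop_add_const_right _ ((F - H) y₀) hHtop)
  filter_upwards [Ico_mem_nhdsLT hy₀] with y hy
  have := hmono (left_mem_Ico.2 hy₀) hy hy.1
  simp only [Pi.sub_apply] at this ⊢
  linarith

theorem tendsto_atBot_of_div_sq_le_deriv {F F' : ℝ → ℝ} {a y₀ c : ℝ} (hc : 0 < c) (hy₀ : a < y₀)
    (hF : ∀ y ∈ Ioc a y₀, HasDerivAt F (F' y) y)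
    (hF' : ∀ y ∈ Ioc a y₀, c / (y - a) ^ 2 ≤ F' y) :
    Tendsto F (𝓝[>] a) atBot := by
  have hmem : ∀ y ∈ Ico (-y₀) (-a), -y ∈ Ioc a y₀ := fun y hy =>
    ⟨lt_neg_of_lt_neg hy.2, neg_le.1 hy.1⟩
  have hreflect := tendsto_atTop_of_div_sq_le_deriv (F := fun y => -F (-y)) (F' := fun y => F' (-y))
    hc (neg_lt_neg hy₀)
    (fun y hy => by
      simpa [Function.comp_def] using ((hF (-y) (hmem y hy)).comp y (hasDerivAt_neg' y)).fun_neg)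
    (fun y hy => by simpa [neg_sub_comm] using hF' (-y) (hmem y hy))
  simpa using tendsto_neg_atTop_iff.1 (hreflect.comp tendsto_neg_nhdsGT)

theorem exists_leftInvOn_hasDerivAt_of_tendsto {F F' : ℝ → ℝ} {a b : ℝ} (hab : a < b)
    (hF : ∀ y ∈ Ioo a b, HasDerivAt F (F' y) y) (hF' : ∀ y ∈ Ioo a b, 0 < F' y)
    (ha : Tendsto F (𝓝[>] a) atBot) (hb : Tendsto F (𝓝[<] b) atTop) :
    ∃ Y : ℝ → ℝ, LeftInvOn Y F (Ioo a b) ∧ ∀ t, HasDerivAt Y (F' (Y t))⁻¹ t := by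
  have hcont : ContinuousOn F (Ioo a b) := fun y hy => (hF y hy).continuousAt.continuousWithinAt
  have hmono : StrictMonoOn F (Ioo a b) :=
    strictMonoOn_of_hasDerivWithinAt_pos (convex_Ioo a b) hcont
      (fun y hy => (hF y (interior_subset hy)).hasDerivWithinAt)
      (fun y hy => hF' y (interior_subset hy))
  have hsurj : SurjOn F (Ioo a b) univ :=
    hcont.surjOn_of_tendsto (nonempty_Ioo.2 hab) ((tendsto_comp_coe_Ioo_atBot hab).2 ha)
      ((tendsto_comp_coe_Ioo_atTop hab).2 hb)
  set Y := Function.invFunOn F (Ioo a b)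
  have hY : ∀ t, Y t ∈ Ioo a b ∧ F (Y t) = t := fun t => Function.invFunOn_pos (hsurj (mem_univ t))
  have hYF : LeftInvOn Y F (Ioo a b) := hmono.injOn.leftInvOn_invFunOn
  have hYmono : StrictMono Y := fun s t hst =>
    (hmono.lt_iff_lt (hY s).1 (hY t).1).1 (by rwa [(hY s).2, (hY t).2])
  have hrange : range Y = Ioo a b :=
    Subset.antisymm (range_subset_iff.2 fun t => (hY t).1) fun y hy => ⟨F y, hYF hy⟩
  have hYcont : ∀ t, ContinuousAt Y t := fun t =>
    (hYmono.strictMonoOn univ).continuousAt_of_image_mem_nhds univ_mem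
      (by rw [image_univ, hrange]; exact isOpen_Ioo.mem_nhds (hY t).1)
  exact ⟨Y, hYF, fun t => HasDerivAt.of_local_left_inverse (hYcont t) (hF _ (hY t).1)
    (hF' _ (hY t).1).ne' (Eventually.of_forall fun s => (hY s).2)⟩

theorem exists_forall_hasDerivAt_of_le_sq {f : ℝ → ℝ} {a b y₀ C : ℝ} (hy₀ : y₀ ∈ Ioo a b)
    (hf : ContinuousOn f (Ioo a b)) (hpos : ∀ y ∈ Ioo a b, 0 < f y)
    (ha : ∀ y ∈ Ioo a b, f y ≤ C * (y - a) ^ 2) (hb : ∀ y ∈ Ioo a b, f y ≤ C * (b - y) ^ 2) :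
    ∃ Y : ℝ → ℝ, Y 0 = y₀ ∧ ∀ t, HasDerivAt Y (f (Y t)) t := by
  set F : ℝ → ℝ := fun z => ∫ s in y₀..z, (f s)⁻¹
  have hF : ∀ y ∈ Ioo a b, HasDerivAt F (f y)⁻¹ y := fun y hy =>
    hasDerivAt_intervalIntegral_of_continuousOn_Ioo
      (hf.inv₀ fun y hy => (hpos y hy).ne') hy₀ hy
  have hC : 0 < C := pos_of_mul_pos_left ((hpos y₀ hy₀).trans_le (hb y₀ hy₀)) (sq_nonneg _)
  have hinv_le : ∀ y ∈ Ioo a b, ∀ d, f y ≤ C * d ^ 2 → C⁻¹ / d ^ 2 ≤ (f y)⁻¹ := fun y hy d h => by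
    rw [div_eq_mul_inv, ← mul_inv]
    exact inv_anti₀ (hpos y hy) h
  have hmemb : ∀ y ∈ Ico y₀ b, y ∈ Ioo a b := fun y hy => ⟨hy₀.1.trans_le hy.1, hy.2⟩
  have hmema : ∀ y ∈ Ioc a y₀, y ∈ Ioo a b := fun y hy => ⟨hy.1, hy.2.trans_lt hy₀.2⟩
  have htop : Tendsto F (𝓝[<] b) atTop :=
    tendsto_atTop_of_div_sq_le_deriv (inv_pos.2 hC) hy₀.2 (fun y hy => hF y (hmemb y hy))
      (fun y hy => hinv_le y (hmemb y hy) _ (hb y (hmemb y hy)))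
  have hbot : Tendsto F (𝓝[>] a) atBot :=
    tendsto_atBot_of_div_sq_le_deriv (inv_pos.2 hC) hy₀.1 (fun y hy => hF y (hmema y hy))
      (fun y hy => hinv_le y (hmema y hy) _ (ha y (hmema y hy)))
  obtain ⟨Y, hYF, hY⟩ := exists_leftInvOn_hasDerivAt_of_tendsto (hy₀.1.trans hy₀.2) hF
    (fun y hy => inv_pos.2 (hpos y hy)) hbot htop
  refine ⟨Y, ?_, fun t => by simpa using hY t⟩
  simpa [F] using hYF hy₀

theorem Real.sin_sq_le_sq_sub_int_mul_pi (y : ℝ) (k : ℤ) : sin y ^ 2 ≤ (y - k * π) ^ 2 :=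
  calc sin y ^ 2 = sin (y - k * π) ^ 2 := by
        rw [sin_sub_int_mul_pi, mul_pow, ← sq_abs ((-1 : ℝ) ^ k), abs_neg_one_zpow, one_pow,
          one_mul]
    _ ≤ (y - k * π) ^ 2 := sin_sq_le_sq

theorem Real.sin_ne_zero_of_mem_Ioo {y : ℝ} (k : ℤ) (hy : y ∈ Ioo (k * π) ((k + 1) * π)) :
    sin y ≠ 0 := by
  have hpos := sin_pos_of_pos_of_lt_pi (x := y - k * π) (by linarith [hy.1]) (by linarith [hy.2])
  rw [sin_sub_int_mul_pi] at hpos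
  intro h
  simp [h] at hpos

theorem Real.mem_Ioo_floor_div_pi_mul_pi {y : ℝ} (hy : sin y ≠ 0) :
    y ∈ Ioo (⌊y / π⌋ * π) ((⌊y / π⌋ + 1) * π) := by
  refine ⟨lt_of_le_of_ne ((le_div_iff₀ pi_pos).1 (Int.floor_le _)) ?_,
    (div_lt_iff₀ pi_pos).1 (Int.lt_floor_add_one _)⟩
  intro h
  exact hy (h ▸ sin_int_mul_pi _)

noncomputable def sinField (y : ℝ) : ℝ := 2 * y ^ 2 * sin y ^ 2

theorem sinField_pos_of_mem_Ioo {y : ℝ} (k : ℤ) (hy : y ∈ Ioo (k * π) ((k + 1) * π)) :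
    0 < sinField y := by
  have hsin := sin_ne_zero_of_mem_Ioo k hy
  have hy0 : y ≠ 0 := by rintro rfl; exact hsin sin_zero
  unfold sinField
  positivity

theorem sinField_le_sq_sub_int_mul_pi {y M : ℝ} (hy : |y| ≤ M) (k : ℤ) :
    sinField y ≤ 2 * M ^ 2 * (y - k * π) ^ 2 := by
  have hyM : y ^ 2 ≤ M ^ 2 := sq_le_sq' (abs_le.1 hy).1 (abs_le.1 hy).2
  unfold sinField
  exact mul_le_mul (by linarith) (sin_sq_le_sq_sub_int_mul_pi y k) (sq_nonneg _) (by positivity)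

theorem exists_forall_hasDerivAt_sinField (y₀ : ℝ) :
    ∃ Y : ℝ → ℝ, Y 0 = y₀ ∧ ∀ t, HasDerivAt Y (sinField (Y t)) t := by
  by_cases hsin : sin y₀ = 0
  · exact ⟨fun _ => y₀, rfl, fun t => by simpa [sinField, hsin] using hasDerivAt_const t y₀⟩
  set k := ⌊y₀ / π⌋
  have habs : ∀ y ∈ Ioo (k * π) ((k + 1) * π), |y| ≤ |k * π| + π := fun y hy =>
    abs_le.2 ⟨by linarith [neg_abs_le (k * π), hy.1, pi_pos],
      by linarith [le_abs_self (k * π), hy.2]⟩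
  exact exists_forall_hasDerivAt_of_le_sq (mem_Ioo_floor_div_pi_mul_pi hsin)
    (by unfold sinField; fun_prop) (fun y hy => sinField_pos_of_mem_Ioo k hy)
    (fun y hy => sinField_le_sq_sub_int_mul_pi (habs y hy) k)
    (fun y hy => (sinField_le_sq_sub_int_mul_pi (habs y hy) (k + 1)).trans_eq (by push_cast; ring))

/-- The planar vector field `(x, y) ↦ (1, 2y² sin²(y))` is complete: for every initial
point `(x₀, y₀)` there is a globally defined integral curve through it. -/
theorem complete_connection_sinField :
    ∀ x₀ y₀ : ℝ, ∃ γ : ℝ → ℝ × ℝ,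
      γ 0 = (x₀, y₀) ∧
      ∀ t : ℝ,
        HasDerivAt (fun s => (γ s).1) 1 t ∧
        HasDerivAt (fun s => (γ s).2)
          (2 * (γ t).2 ^ 2 * Real.sin ((γ t).2) ^ 2) t := by
  intro x₀ y₀
  obtain ⟨Y, hY0, hY⟩ := exists_forall_hasDerivAt_sinField y₀
  exact ⟨fun t => (x₀ + t, Y t), by simp [hY0],
    fun t => ⟨by simpa using (hasDerivAt_id t).const_add x₀, hY t⟩⟩
end

section
/- For every initial point (x₀, y₀) ∈ ℝ², there exists a differentiable curve γ : ℝ → ℝ × ℝ, defined on all of ℝ, such that γ(0) = (x₀, y₀) and for all t ∈ ℝ the derivative of the first component equals 1 and the derivative of the second component y(t) equals 2·y(t)²·(cos y(t))². In other words, the planar vector field (x,y) ↦ (1, 2y² cos²(y)) is complete: every integral curve extends to all of ℝ. -/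
/-!
The field `f y = 2 y² cos² y` is smooth, hence locally Lipschitz, and vanishes at the zeros of
`cos`, which lie on both sides of every `y₀`. Between two such zeros `a ≤ y₀ ≤ b`, the field
`f ∘ projIcc a b` is bounded and globally Lipschitz, so its solutions exist for all time
(Picard–Lindelöf on `[-T, T]` for every `T`, glued together by uniqueness). By uniqueness again,
a solution cannot cross the equilibria `a` and `b`, so it stays in `[a, b]`, where the modified
field agrees with `f`.
-/

open Set
open scoped NNReal Topology

section BoundedLipschitz

variable {E : Type*} [NormedAddCommGroup E] [NormedSpace ℝ E] [CompleteSpace E]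
  {g : E → E} {K : ℝ≥0}

theorem exists_forall_mem_Ioo_hasDerivAt_of_lipschitzWith (hg : LipschitzWith K g)
    (hbdd : Bornology.IsBounded (range g)) (x₀ : E) (T : ℝ) :
    ∃ γ : ℝ → E, γ 0 = x₀ ∧ ∀ t ∈ Ioo (-T) T, HasDerivAt γ (g (γ t)) t := by
  obtain ⟨C, hC⟩ := hbdd.exists_norm_le
  have hpl : IsPicardLindelof (fun _ ↦ g) (tmin := -|T|) (tmax := |T|) ⟨0, by simp⟩ x₀
      (C.toNNReal * ‖T‖₊) 0 C.toNNReal K :=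
    .of_time_independent (fun x _ ↦ (hC _ (mem_range_self x)).trans (Real.le_coe_toNNReal C))
      hg.lipschitzOnWith (by simp)
  obtain ⟨γ, hγ0, hγ⟩ := hpl.exists_eq_forall_mem_Icc_hasDerivWithinAt₀
  refine ⟨γ, hγ0, fun t ht ↦ ?_⟩
  have ht' : t ∈ Ioo (-|T|) |T| := ⟨(neg_le_neg (le_abs_self T)).trans_lt ht.1,
    ht.2.trans_le (le_abs_self T)⟩
  exact (hγ t (Ioo_subset_Icc_self ht')).hasDerivAt (Icc_mem_nhds ht'.1 ht'.2)

theorem exists_isIntegralCurve_of_lipschitzWith (hg : LipschitzWith K g)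
    (hbdd : Bornology.IsBounded (range g)) (x₀ : E) :
    ∃ γ : ℝ → E, γ 0 = x₀ ∧ IsIntegralCurve γ fun _ ↦ g := by
  choose α hα0 hα using exists_forall_mem_Ioo_hasDerivAt_of_lipschitzWith hg hbdd x₀
  have hagree : ∀ T T' t, |t| < T → |t| < T' → α T t = α T' t := by
    intro T T' t hT hT'
    have hmin : |t| < min T T' := lt_min hT hT'
    have hT_le : Ioo (-min T T') (min T T') ⊆ Ioo (-T) T :=
      Ioo_subset_Ioo (neg_le_neg (min_le_left T T')) (min_le_left T T')
    have hT'_le : Ioo (-min T T') (min T T') ⊆ Ioo (-T') T' :=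
      Ioo_subset_Ioo (neg_le_neg (min_le_right T T')) (min_le_right T T')
    exact ODE_solution_unique_of_mem_Ioo (v := fun _ ↦ g) (s := fun _ ↦ univ)
      (fun _ _ ↦ hg.lipschitzOnWith) (abs_lt.1 (by simpa using (abs_nonneg t).trans_lt hmin))
      (fun s hs ↦ ⟨hα T s (hT_le hs), trivial⟩) (fun s hs ↦ ⟨hα T' s (hT'_le hs), trivial⟩)
      ((hα0 T).trans (hα0 T').symm) (abs_lt.1 hmin)
  refine ⟨fun t ↦ α (|t| + 1) t, by simpa using hα0 1, fun t ↦ ?_⟩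
  have hnear : (fun s ↦ α (|s| + 1) s) =ᶠ[𝓝 t] α (|t| + 1) := by
    filter_upwards [Ioo_mem_nhds (abs_lt.1 (lt_add_one |t|)).1 (abs_lt.1 (lt_add_one |t|)).2]
      with s hs
    exact hagree _ _ s (lt_add_one _) (abs_lt.2 hs)
  exact (hα (|t| + 1) t (abs_lt.1 (lt_add_one _))).congr_of_eventuallyEq hnear

end BoundedLipschitz

section RealLine

variable {f g : ℝ → ℝ} {γ : ℝ → ℝ} {K : ℝ≥0} {a b c y₀ : ℝ}

theorem IsIntegralCurve.eq_const_of_mem_uIcc (hg : LipschitzWith K g)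
    (hγ : IsIntegralCurve γ fun _ ↦ g) (hc : g c = 0) {s t : ℝ} (hst : c ∈ uIcc (γ s) (γ t)) :
    γ = fun _ ↦ c := by
  obtain ⟨r, -, hr⟩ :=
    intermediate_value_uIcc (fun u _ ↦ (hγ u).continuousAt.continuousWithinAt) hst
  exact ODE_solution_unique_univ (v := fun _ ↦ g) (s := fun _ ↦ univ)
    (fun _ ↦ hg.lipschitzOnWith) (fun u ↦ ⟨hγ u, trivial⟩)
    (fun u ↦ ⟨by simpa [hc] using hasDerivAt_const u c, trivial⟩) hr

theorem IsIntegralCurve.mem_Icc_of_eq_zero (hg : LipschitzWith K g)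
    (hγ : IsIntegralCurve γ fun _ ↦ g) (ha : g a = 0) (hb : g b = 0) (h0 : γ 0 ∈ Icc a b)
    (t : ℝ) : γ t ∈ Icc a b := by
  by_contra hout
  rcases not_and_or.1 hout with hta | htb
  · have := congr_fun (hγ.eq_const_of_mem_uIcc hg ha (s := t) (t := 0)
      (Icc_subset_uIcc ⟨(not_le.1 hta).le, h0.1⟩)) t
    exact hta this.ge
  · have := congr_fun (hγ.eq_const_of_mem_uIcc hg hb (s := 0) (t := t)
      (Icc_subset_uIcc ⟨h0.2, (not_le.1 htb).le⟩)) t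
    exact htb this.le

theorem exists_isIntegralCurve_of_locallyLipschitz (hf : LocallyLipschitz f) (ha : f a = 0)
    (hb : f b = 0) (hy₀ : y₀ ∈ Icc a b) :
    ∃ γ : ℝ → ℝ, γ 0 = y₀ ∧ IsIntegralCurve γ fun _ ↦ f := by
  have hab : a ≤ b := hy₀.1.trans hy₀.2
  obtain ⟨K, hK⟩ := hf.locallyLipschitzOn.exists_lipschitzOnWith_of_compact isCompact_Icc
  set g : ℝ → ℝ := fun y ↦ f (projIcc a b hab y)
  have hg : LipschitzWith (K * 1) g := hK.to_restrict.comp (LipschitzWith.projIcc hab)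
  have hbdd : Bornology.IsBounded (range g) :=
    (isCompact_Icc.image_of_continuousOn hK.continuousOn).isBounded.subset
      (range_subset_iff.2 fun y ↦ mem_image_of_mem f (projIcc a b hab y).2)
  have hfg : ∀ y ∈ Icc a b, g y = f y := fun y hy ↦ by simp [g, projIcc_of_mem hab hy]
  obtain ⟨γ, hγ0, hγ⟩ := exists_isIntegralCurve_of_lipschitzWith hg hbdd y₀
  have hγI : ∀ t, γ t ∈ Icc a b := hγ.mem_Icc_of_eq_zero hg
    ((hfg a (left_mem_Icc.2 hab)).trans ha) ((hfg b (right_mem_Icc.2 hab)).trans hb) (hγ0 ▸ hy₀)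
  refine ⟨γ, hγ0, fun t ↦ ?_⟩
  simpa only [hfg (γ t) (hγI t)] using hγ t

end RealLine

theorem Real.exists_cos_eq_zero_le_le (y : ℝ) :
    ∃ a b, Real.cos a = 0 ∧ Real.cos b = 0 ∧ a ≤ y ∧ y ≤ b := by
  set k := ⌊y / Real.pi⌋
  have hk : (k : ℝ) * Real.pi ≤ y := by
    have := Int.floor_le (y / Real.pi)
    rwa [le_div_iff₀ Real.pi_pos] at this
  have hk' : y < (k + 1) * Real.pi := by
    have := Int.lt_floor_add_one (y / Real.pi)
    rwa [div_lt_iff₀ Real.pi_pos] at this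
  refine ⟨(2 * ((k - 1 : ℤ) : ℝ) + 1) * Real.pi / 2, (2 * ((k + 1 : ℤ) : ℝ) + 1) * Real.pi / 2,
    Real.cos_eq_zero_iff.2 ⟨_, rfl⟩, Real.cos_eq_zero_iff.2 ⟨_, rfl⟩, ?_, ?_⟩ <;>
  push_cast <;> nlinarith [Real.pi_pos]

/-- The planar vector field `(x, y) ↦ (1, 2y² cos²(y))` is complete: for every initial
point `(x₀, y₀)` there is a globally defined integral curve through it. -/
theorem complete_connection_cosField :
    ∀ x₀ y₀ : ℝ, ∃ γ : ℝ → ℝ × ℝ,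
      γ 0 = (x₀, y₀) ∧
      ∀ t : ℝ,
        HasDerivAt (fun s => (γ s).1) 1 t ∧
        HasDerivAt (fun s => (γ s).2)
          (2 * (γ t).2 ^ 2 * Real.cos ((γ t).2) ^ 2) t := by
  intro x₀ y₀
  obtain ⟨a, b, ha, hb, hay, hyb⟩ := Real.exists_cos_eq_zero_le_le y₀
  have hf : LocallyLipschitz fun y : ℝ ↦ 2 * y ^ 2 * Real.cos y ^ 2 :=
    ContDiff.locallyLipschitz (𝕂 := ℝ) (by fun_prop)
  obtain ⟨Y, hY0, hY⟩ := exists_isIntegralCurve_of_locallyLipschitz hf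
    (by simp [ha]) (by simp [hb]) ⟨hay, hyb⟩
  exact ⟨fun t ↦ (x₀ + t, Y t), by simp [hY0], fun t ↦ ⟨(hasDerivAt_id t).const_add x₀, hY t⟩⟩
end

section
/- Let I ⊆ ℝ be an interval, t₀ ∈ I, k ∈ ℤ, and let y : I → ℝ be a differentiable function satisfying y'(t) = 2·y(t)²·(sin y(t))² for all t ∈ I. If k·π ≤ y(t₀) ≤ (k+1)·π, then k·π ≤ y(t) ≤ (k+1)·π for all t ∈ I. (The constant solutions t ↦ kπ trap every other solution of this ODE between consecutive multiples of π; in particular every solution is bounded.) -/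
/-!
The multiples of `π` are equilibria of the locally Lipschitz field `x ↦ 2 x² sin² x`. By
uniqueness of solutions, a solution that meets an equilibrium at one time is that equilibrium
everywhere; by the intermediate value theorem, a solution cannot get from one side of an
equilibrium to the other without meeting it.
-/

open Set

section AutonomousODE

variable {E : Type*} [NormedAddCommGroup E] [NormedSpace ℝ E] {f : E → E} {y z : ℝ → E}

theorem ODE_solution_unique_of_locallyLipschitz_Icc (hf : LocallyLipschitz f) {a b : ℝ}
    (hy : ∀ t ∈ Icc a b, HasDerivWithinAt y (f (y t)) (Icc a b) t)
    (hz : ∀ t ∈ Icc a b, HasDerivWithinAt z (f (z t)) (Icc a b) t)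
    (heq : y a = z a ∨ y b = z b) :
    EqOn y z (Icc a b) := by
  have hyc : ContinuousOn y (Icc a b) := fun t ht ↦ (hy t ht).continuousWithinAt
  have hzc : ContinuousOn z (Icc a b) := fun t ht ↦ (hz t ht).continuousWithinAt
  obtain ⟨K, hK⟩ := hf.locallyLipschitzOn.exists_lipschitzOnWith_of_compact
    ((isCompact_Icc.image_of_continuousOn hyc).union (isCompact_Icc.image_of_continuousOn hzc))
  have hyK : ∀ t ∈ Icc a b, y t ∈ y '' Icc a b ∪ z '' Icc a b := fun t ht ↦ .inl ⟨t, ht, rfl⟩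
  have hzK : ∀ t ∈ Icc a b, z t ∈ y '' Icc a b ∪ z '' Icc a b := fun t ht ↦ .inr ⟨t, ht, rfl⟩
  rcases heq with ha | hb
  · exact ODE_solution_unique_of_mem_Icc_right (fun _ _ ↦ hK) hyc
      (fun t ht ↦ (hy t (Ico_subset_Icc_self ht)).mono_of_mem_nhdsWithin
        (Icc_mem_nhdsGE_of_mem ht))
      (fun t ht ↦ hyK t (Ico_subset_Icc_self ht)) hzc
      (fun t ht ↦ (hz t (Ico_subset_Icc_self ht)).mono_of_mem_nhdsWithin
        (Icc_mem_nhdsGE_of_mem ht))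
      (fun t ht ↦ hzK t (Ico_subset_Icc_self ht)) ha
  · exact ODE_solution_unique_of_mem_Icc_left (fun _ _ ↦ hK) hyc
      (fun t ht ↦ (hy t (Ioc_subset_Icc_self ht)).mono_of_mem_nhdsWithin
        (Icc_mem_nhdsLE_of_mem ht))
      (fun t ht ↦ hyK t (Ioc_subset_Icc_self ht)) hzc
      (fun t ht ↦ (hz t (Ioc_subset_Icc_self ht)).mono_of_mem_nhdsWithin
        (Icc_mem_nhdsLE_of_mem ht))
      (fun t ht ↦ hzK t (Ioc_subset_Icc_self ht)) hb

theorem ODE_solution_unique_of_locallyLipschitz_of_ordConnected (hf : LocallyLipschitz f)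
    {I : Set ℝ} (hI : I.OrdConnected)
    (hy : ∀ t ∈ I, HasDerivWithinAt y (f (y t)) I t)
    (hz : ∀ t ∈ I, HasDerivWithinAt z (f (z t)) I t)
    {t₀ : ℝ} (ht₀ : t₀ ∈ I) (heq : y t₀ = z t₀) :
    EqOn y z I := by
  intro t ht
  have hrestrict : ∀ {a b}, a ∈ I → b ∈ I → ∀ {x : ℝ → E},
      (∀ t ∈ I, HasDerivWithinAt x (f (x t)) I t) →
      ∀ t ∈ Icc a b, HasDerivWithinAt x (f (x t)) (Icc a b) t :=
    fun ha hb _ hx t ht ↦ (hx t (hI.out ha hb ht)).mono (hI.out ha hb)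
  rcases le_total t₀ t with h | h
  · exact ODE_solution_unique_of_locallyLipschitz_Icc hf (hrestrict ht₀ ht hy)
      (hrestrict ht₀ ht hz) (.inl heq) (right_mem_Icc.2 h)
  · exact ODE_solution_unique_of_locallyLipschitz_Icc hf (hrestrict ht ht₀ hy)
      (hrestrict ht ht₀ hz) (.inr heq) (left_mem_Icc.2 h)

theorem ODE_solution_eq_of_apply_eq_zero (hf : LocallyLipschitz f)
    {I : Set ℝ} (hI : I.OrdConnected) (hy : ∀ t ∈ I, HasDerivWithinAt y (f (y t)) I t)
    {c : E} (hc : f c = 0) {t₀ : ℝ} (ht₀ : t₀ ∈ I) (h₀ : y t₀ = c) {t : ℝ} (ht : t ∈ I) :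
    y t = c :=
  ODE_solution_unique_of_locallyLipschitz_of_ordConnected (z := fun _ ↦ c) hf hI hy
    (fun t _ ↦ hc ▸ hasDerivWithinAt_const t I c) ht₀ h₀ ht

end AutonomousODE

section ScalarODE

variable {f : ℝ → ℝ} {y : ℝ → ℝ} {I : Set ℝ} {c t₀ t : ℝ}

theorem ODE_solution_le_of_apply_eq_zero (hf : LocallyLipschitz f) (hI : I.OrdConnected)
    (hy : ∀ t ∈ I, HasDerivWithinAt y (f (y t)) I t) (hc : f c = 0)
    (ht₀ : t₀ ∈ I) (ht : t ∈ I) (h₀ : y t₀ ≤ c) : y t ≤ c := by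
  by_contra! h
  have hyc : ContinuousOn y I := fun s hs ↦ (hy s hs).continuousWithinAt
  obtain ⟨t₁, ht₁, hyt₁⟩ :=
    hI.isPreconnected.intermediate_value ht₀ ht hyc ⟨h₀, h.le⟩
  exact h.ne' (ODE_solution_eq_of_apply_eq_zero hf hI hy hc ht₁ hyt₁ ht)

theorem ODE_solution_ge_of_apply_eq_zero (hf : LocallyLipschitz f) (hI : I.OrdConnected)
    (hy : ∀ t ∈ I, HasDerivWithinAt y (f (y t)) I t) (hc : f c = 0)
    (ht₀ : t₀ ∈ I) (ht : t ∈ I) (h₀ : c ≤ y t₀) : c ≤ y t := by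
  by_contra! h
  have hyc : ContinuousOn y I := fun s hs ↦ (hy s hs).continuousWithinAt
  obtain ⟨t₁, ht₁, hyt₁⟩ :=
    hI.isPreconnected.intermediate_value ht ht₀ hyc ⟨h.le, h₀⟩
  exact h.ne (ODE_solution_eq_of_apply_eq_zero hf hI hy hc ht₁ hyt₁ ht)

end ScalarODE

theorem locallyLipschitz_two_mul_sq_mul_sin_sq :
    LocallyLipschitz fun x : ℝ ↦ 2 * x ^ 2 * Real.sin x ^ 2 :=
  ContDiff.locallyLipschitz (𝕂 := ℝ) (by fun_prop)

/-- Solutions of `y' = 2 y² sin²(y)` on an interval are trapped between consecutive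
multiples of `π`: if `kπ ≤ y(t₀) ≤ (k+1)π` then the same bounds hold for all `t` in the
interval. -/
theorem solutions_trapped_between_multiples_of_pi
    (I : Set ℝ) (hI : I.OrdConnected) (t₀ : ℝ) (ht₀ : t₀ ∈ I) (k : ℤ)
    (y : ℝ → ℝ)
    (hy : ∀ t ∈ I, HasDerivWithinAt y (2 * y t ^ 2 * Real.sin (y t) ^ 2) I t)
    (h₀ : (k : ℝ) * Real.pi ≤ y t₀ ∧ y t₀ ≤ ((k : ℝ) + 1) * Real.pi) :
    ∀ t ∈ I, (k : ℝ) * Real.pi ≤ y t ∧ y t ≤ ((k : ℝ) + 1) * Real.pi := by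
  have hf := locallyLipschitz_two_mul_sq_mul_sin_sq
  have hk : Real.sin (k * Real.pi) = 0 := Real.sin_int_mul_pi k
  have hk₁ : Real.sin ((k + 1) * Real.pi) = 0 := by exact_mod_cast Real.sin_int_mul_pi (k + 1)
  intro t ht
  exact ⟨ODE_solution_ge_of_apply_eq_zero hf hI hy (by simp [hk]) ht₀ ht h₀.1,
    ODE_solution_le_of_apply_eq_zero hf hI hy (by simp [hk₁]) ht₀ ht h₀.2⟩
end

section
/- There is no differentiable curve γ : ℝ → ℝ × ℝ defined on all of ℝ with γ(0) = (0, 1) such that for all t ∈ ℝ the derivative of the first component equals 1 and the derivative of the second component y(t) equals y(t)². Equivalently, there is no differentiable function y : ℝ → ℝ with y(0) = 1 and y'(t) = y(t)² for all t ∈ ℝ. Hence the planar vector field (x,y) ↦ (1, y²), which is the average of the two complete fields (1, 2y² sin²(y)) and (1, 2y² cos²(y)), is not complete. -/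
/-- The planar vector field `(x, y) ↦ (1, y²)` (the average of the two complete fields
`(1, 2y² sin² y)` and `(1, 2y² cos² y)`) is not complete: there is no globally defined
integral curve through `(0, 1)`. -/
theorem averaged_field_not_complete :
    ¬ ∃ γ : ℝ → ℝ × ℝ,
        γ 0 = (0, 1) ∧
        ∀ t : ℝ,
          HasDerivAt (fun s => (γ s).1) 1 t ∧
          HasDerivAt (fun s => (γ s).2) ((γ t).2 ^ 2) t := by
  rintro ⟨γ, h0, hderiv⟩
  set y : ℝ → ℝ := fun s => (γ s).2 with hy
  have hy0 : y 0 = 1 := by simp [hy, h0]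
  have hyd : ∀ t, HasDerivAt y ((y t) ^ 2) t := fun t => (hderiv t).2
  -- y is monotone since y' = y² ≥ 0
  have hmono : Monotone y := by
    apply monotone_of_deriv_nonneg
    · exact fun t => (hyd t).differentiableAt
    · intro t
      rw [(hyd t).deriv]
      positivity
  have hpos : ∀ t ∈ Set.Icc (0:ℝ) 1, (1:ℝ) ≤ y t := by
    intro t ht
    calc (1:ℝ) = y 0 := hy0.symm
    _ ≤ y t := hmono ht.1
  have hne : ∀ t ∈ Set.Icc (0:ℝ) 1, y t ≠ 0 := by
    intro t ht
    have := hpos t ht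
    linarith
  -- g t = (y t)⁻¹ + t has zero derivative on [0,1]
  set g : ℝ → ℝ := fun t => (y t)⁻¹ + t with hg
  have hgd : ∀ t ∈ Set.Icc (0:ℝ) 1, HasDerivWithinAt g 0 (Set.Icc (0:ℝ) 1) t := by
    intro t ht
    have h1 : HasDerivAt (fun s => (y s)⁻¹) (-(y t ^ 2) / (y t) ^ 2) t :=
      (hyd t).inv (hne t ht)
    have h2 : HasDerivAt g (-(y t ^ 2) / (y t) ^ 2 + 1) t := h1.add (hasDerivAt_id t)
    have h3 : -(y t ^ 2) / (y t) ^ 2 + 1 = 0 := by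
      rw [neg_div, div_self (pow_ne_zero 2 (hne t ht))]; ring
    rw [h3] at h2
    exact h2.hasDerivWithinAt
  have key : ‖g 1 - g 0‖ ≤ 0 * ‖(1:ℝ) - 0‖ := by
    refine Convex.norm_image_sub_le_of_norm_hasDerivWithin_le (f' := fun _ => (0:ℝ))
      hgd (fun t _ => by simp) (convex_Icc 0 1) ?_ ?_
    · exact ⟨le_refl 0, zero_le_one⟩
    · exact ⟨zero_le_one, le_refl 1⟩
  have hgeq : g 1 = g 0 := by
    simp at key
    linarith [abs_nonneg (g 1 - g 0), abs_sub_abs_le_abs_sub (g 1) (g 0), key]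
  have h10 : (y 1)⁻¹ + 1 = 1 := by
    have e0 : g 0 = 1 := by
      show (y 0)⁻¹ + 0 = 1
      rw [hy0]; norm_num
    have e1 : g 1 = (y 1)⁻¹ + 1 := rfl
    rw [← e1, hgeq, e0]
  have hy1 : (1:ℝ) ≤ y 1 := hpos 1 ⟨zero_le_one, le_refl 1⟩
  have : (0:ℝ) < (y 1)⁻¹ := inv_pos.mpr (by linarith)
  linarith
end
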